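/- arXiv:0906.2062 — 3 statements merged into one kernel-verified Lean document; each statement's English description precedes it below -/
import Mathlib

section
/- If G is a locally compact second countable Hausdorff Abelian group with Haar measure λ, T(ω,s,·) is a weighted transport-kernel satisfying the invariance property T(θ_t ω, s−t, B−t) = T(ω,s,B) for all s,t ∈ G, ω ∈ Ω, B ∈ 𝒢, and ξ is an invariant random measure (ξ(θ_s ω, B−s) = ξ(ω,B)), then the measure η(ω,·) := ∫ T(ω,s,·) ξ(ω,ds), assumed locally finite, is again an invariant random measure: η(θ_s ω, B−s) = η(ω,B) for all s, ω, B. -/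
open MeasureTheory Set
open scoped ENNReal

theorem MeasureTheory.lintegral_comp_add_right_of_preimage_eq {G : Type*} [AddGroup G]
    [MeasurableSpace G] [MeasurableAdd G] {μ ν : Measure G} {s : G}
    (h : ∀ B : Set G, MeasurableSet B → μ ((· + s) ⁻¹' B) = ν B) (f : G → ℝ≥0∞) :
    ∫⁻ u, f (u + s) ∂μ = ∫⁻ r, f r ∂ν := by
  have hmap : μ.map (MeasurableEquiv.addRight s) = ν := by
    ext B hB
    rw [Measure.map_apply (MeasurableEquiv.measurable _) hB]
    exact h B hB
  rw [← hmap, lintegral_map_equiv]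
  rfl

theorem stmt0_general
    {Ω : Type*} [MeasurableSpace Ω]
    {G : Type*} [AddCommGroup G] [TopologicalSpace G] [IsTopologicalAddGroup G]
    [MeasurableSpace G] [BorelSpace G]
    (θ : G → Ω → Ω)
    (T : Ω → G → Measure G)
    (hTinv : ∀ (ω : Ω) (s t : G) (B : Set G), MeasurableSet B →
      T (θ t ω) (s - t) ((· + t) ⁻¹' B) = T ω s B)
    (ξ : Ω → Measure G)
    (hξinv : ∀ (ω : Ω) (s : G) (B : Set G), MeasurableSet B →
      ξ (θ s ω) ((· + s) ⁻¹' B) = ξ ω B)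
    (η : Ω → Measure G)
    (hη : ∀ (ω : Ω) (B : Set G), MeasurableSet B → η ω B = ∫⁻ s, T ω s B ∂(ξ ω)) :
    ∀ (ω : Ω) (s : G) (B : Set G), MeasurableSet B →
      η (θ s ω) ((· + s) ⁻¹' B) = η ω B := by
  intro ω s B hB
  have hT : ∀ u : G, T (θ s ω) u ((· + s) ⁻¹' B) = T ω (u + s) B := fun u => by
    simpa using hTinv ω (u + s) s B hB
  rw [hη _ _ (measurable_add_const s hB), hη ω B hB]
  simp_rw [hT]
  exact lintegral_comp_add_right_of_preimage_eq (hξinv ω s) fun r => T ω r B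

/-- If `T` is an invariant weighted transport-kernel and `ξ` an invariant
random measure, then `η(ω,·) := ∫ T(ω,s,·) ξ(ω,ds)` (assumed locally finite) is again an
invariant random measure. -/
theorem stmt0
    {Ω : Type*} [MeasurableSpace Ω]
    {G : Type*} [AddCommGroup G] [TopologicalSpace G] [IsTopologicalAddGroup G]
    [LocallyCompactSpace G] [SecondCountableTopology G] [T2Space G]
    [MeasurableSpace G] [BorelSpace G]
    (lam : Measure G) [lam.IsAddHaarMeasure]
    (θ : G → Ω → Ω)
    (hθmeas : Measurable fun p : Ω × G => θ p.2 p.1)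
    (hθ0 : θ 0 = id)
    (hθadd : ∀ s t : G, θ s ∘ θ t = θ (s + t))
    (T : Ω → G → Measure G)
    (hTmeas : ∀ B : Set G, MeasurableSet B → Measurable fun p : Ω × G => T p.1 p.2 B)
    (hTinv : ∀ (ω : Ω) (s t : G) (B : Set G), MeasurableSet B →
      T (θ t ω) (s - t) ((· + t) ⁻¹' B) = T ω s B)
    (ξ : Ω → Measure G)
    (hξmeas : ∀ B : Set G, MeasurableSet B → Measurable fun ω => ξ ω B)
    (hξinv : ∀ (ω : Ω) (s : G) (B : Set G), MeasurableSet B →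
      ξ (θ s ω) ((· + s) ⁻¹' B) = ξ ω B)
    (η : Ω → Measure G)
    (hη : ∀ (ω : Ω) (B : Set G), MeasurableSet B → η ω B = ∫⁻ s, T ω s B ∂(ξ ω))
    (hηfin : ∀ ω, IsLocallyFiniteMeasure (η ω)) :
    ∀ (ω : Ω) (s : G) (B : Set G), MeasurableSet B →
      η (θ s ω) ((· + s) ⁻¹' B) = η ω B :=
  stmt0_general θ T hTinv ξ hξinv η hη
end

section
/- Let ξ be an invariant random measure and ℚ a σ-finite measure on (Ω,ℱ) with ℚ(ξ(G)=0)=0 satisfying the Mecke equation: 𝔼_ℚ[∫ g(θ_s, −s) ξ(ds)] = 𝔼_ℚ[∫ g(θ_0, s) ξ(ds)] for all measurable g : Ω × G → [0,∞). Let h̃ : M × G → [0,∞) be measurable with ∫ h̃(μ,s) μ(ds) = 1 for every nonzero μ ∈ M. Then ℙ(A) := 𝔼_ℚ[∫ h̃(ξ ∘ θ_{−s}, s) 1_A(θ_{−s}) λ(ds)] defines a σ-finite stationary measure on (Ω,ℱ) whose Palm measure with respect to ξ equals ℚ. -/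
/-!
`P` is the image of `Q ⊗ λ`, weighted by `h̃(ξ ∘ θ₋ₛ, s)`, under `(ω, s) ↦ θ₋ₛ ω`.
Covariance `ξ(θ₋ₛ ω) = ξ(ω)(· - s)`, Fubini and the invariance of `λ` turn `𝔼_P ∫ g(θₛ, s) ξ(ds)`
into `𝔼_Q ∫ K(θᵤ, -u) ξ(du)` for an explicit `K`; the Mecke equation removes the shift, and the
normalisation `∫ h̃(μ, s) μ(ds) = 1` collapses the result to `𝔼_Q ∫ g(·, s) λ(ds)`. This refined
Campbell formula says that `Q` is the Palm measure of `P`. It also shows that `P` does not change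
when `h̃` is replaced by another normalised weight; as `P ∘ θₜ⁻¹` is the same construction for the
weight `h̃(ξ ∘ θ₋ₜ, t + ·)`, `P` is stationary. Finally `P` is σ-finite because
`ω ↦ ∫ w(θₛ ω) k(s) ξ_ω(ds)` is `P`-integrable and `P`-a.e. positive when `w` and `k` are
positive integrable functions for `Q` and `λ`.
-/

open MeasureTheory Set ProbabilityTheory
open scoped ENNReal

namespace ProbabilityTheory.Kernel

variable {α β : Type*} [MeasurableSpace α] [MeasurableSpace β]

theorem isSFiniteKernel_of_isFiniteMeasure (κ : Kernel α β) [∀ a, IsFiniteMeasure (κ a)] :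
    IsSFiniteKernel κ := by
  let ν : Kernel α β := ⟨fun a => (κ a univ)⁻¹ • κ a, Measure.measurable_of_measurable_coe _
    fun s hs => ((κ.measurable_coe .univ).inv).mul (κ.measurable_coe hs)⟩
  have : IsFiniteKernel ν := ⟨⟨1, ENNReal.one_lt_top, fun a => ENNReal.inv_mul_le_one _⟩⟩
  have hκ : κ = withDensity ν fun a _ => (κ a univ).toNNReal := by
    have hmeas : Measurable (Function.uncurry fun a (_ : β) => ((κ a univ).toNNReal : ℝ≥0∞)) :=
      (κ.measurable_coe .univ).ennreal_toNNReal.coe_nnreal_ennreal.comp measurable_fst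
    ext a s hs
    rw [Kernel.withDensity_apply' _ hmeas, MeasureTheory.setLIntegral_const, ENNReal.coe_toNNReal
      (measure_ne_top _ _)]
    show _ = _ * ((κ a univ)⁻¹ • κ a) s
    rw [Measure.smul_apply, smul_eq_mul, ← mul_assoc]
    rcases eq_or_ne (κ a univ) 0 with h | h
    · simp [Measure.measure_univ_eq_zero.1 h]
    · rw [ENNReal.mul_inv_cancel h (measure_ne_top _ _), one_mul]
  rw [hκ]
  infer_instance

theorem isSFiniteKernel_of_iUnion_eq_univ (κ : Kernel α β) {s : ℕ → Set β}
    (hs : ∀ n, MeasurableSet (s n)) (hcover : ⋃ n, s n = univ) (hfin : ∀ a n, κ a (s n) < ∞) :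
    IsSFiniteKernel κ := by
  have hD : ∀ n, MeasurableSet (disjointed s n) := MeasurableSet.disjointed hs
  have hκ : κ = Kernel.sum fun n => κ.restrict (hD n) := by
    ext a : 1
    rw [Kernel.sum_apply]
    simp only [Kernel.restrict_apply]
    rw [← Measure.restrict_iUnion (disjoint_disjointed s) hD, iUnion_disjointed, hcover,
      Measure.restrict_univ]
  have (n : ℕ) : IsSFiniteKernel (κ.restrict (hD n)) := by
    have (a : α) : IsFiniteMeasure (κ.restrict (hD n) a) := by
      rw [Kernel.restrict_apply]
      exact isFiniteMeasure_restrict.2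
        ((measure_mono (disjointed_subset s n)).trans_lt (hfin a n)).ne
    exact isSFiniteKernel_of_isFiniteMeasure _
  rw [hκ]
  infer_instance

theorem isSFiniteKernel_of_isLocallyFiniteMeasure [TopologicalSpace β] [SigmaCompactSpace β]
    [T2Space β] [OpensMeasurableSpace β] (κ : Kernel α β) [∀ a, IsLocallyFiniteMeasure (κ a)] :
    IsSFiniteKernel κ :=
  κ.isSFiniteKernel_of_iUnion_eq_univ (fun n => (isCompact_compactCovering β n).measurableSet)
    (iUnion_compactCovering β) fun _ n => (isCompact_compactCovering β n).measure_lt_top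

end ProbabilityTheory.Kernel

theorem MeasureTheory.sigmaFinite_of_lintegral_ne_top {α : Type*} [MeasurableSpace α]
    {μ : Measure α} {f : α → ℝ≥0∞} (hf : Measurable f) (hpos : ∀ᵐ a ∂μ, f a ≠ 0)
    (hfin : ∫⁻ a, f a ∂μ ≠ ∞) : SigmaFinite μ := by
  have : IsFiniteMeasure (μ.withDensity f) := isFiniteMeasure_withDensity hfin
  rw [← withDensity_inv_same hf hpos ((ae_lt_top hf hfin).mono fun _ h => h.ne)]
  exact SigmaFinite.withDensity_of_ne_top
    ((withDensity_absolutelyContinuous μ f).ae_le (hpos.mono fun _ h => ENNReal.inv_ne_top.2 h))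

theorem flow_neg_apply_flow {Ω G : Type*} [AddCommGroup G] {θ : G → Ω → Ω} (hθ0 : θ 0 = id)
    (hflow : ∀ s t ω, θ s (θ t ω) = θ (s + t) ω) (s : G) (ω : Ω) : θ (-s) (θ s ω) = ω := by
  rw [hflow, neg_add_cancel, hθ0, id]

section Palm

variable {Ω G : Type*} [MeasurableSpace Ω] [MeasurableSpace G] {θ : G → Ω → Ω} {ξ : Kernel Ω G}
  {htilde : Measure G → G → ℝ≥0∞} {lam : Measure G} {P Q : Measure Ω}

variable (θ ξ lam) in
/-- The refined Campbell formula, which characterises `Q` as the Palm measure of `P` with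
respect to `ξ`. -/
def IsPalmMeasure (P Q : Measure Ω) : Prop :=
  ∀ g : Ω → G → ℝ≥0∞, Measurable (Function.uncurry g) →
    ∫⁻ ω, ∫⁻ s, g (θ s ω) s ∂ξ ω ∂P = ∫⁻ ω, ∫⁻ s, g ω s ∂lam ∂Q

namespace IsPalmMeasure

theorem measure_eq (h : IsPalmMeasure θ ξ lam P Q) (hθ : Measurable (Function.uncurry θ))
    {A : Set Ω} {B : Set G} (hA : MeasurableSet A) (hB : MeasurableSet B) (hB0 : lam B ≠ 0)
    (hBtop : lam B ≠ ∞) : Q A = (lam B)⁻¹ * ∫⁻ ω, ξ ω (B ∩ {s | θ s ω ∈ A}) ∂P := by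
  have hL (ω : Ω) : ∫⁻ s, A.indicator 1 (θ s ω) * B.indicator 1 s ∂ξ ω
      = ξ ω (B ∩ {s | θ s ω ∈ A}) := by
    rw [← lintegral_indicator_one (s := B ∩ {s | θ s ω ∈ A})
      (hB.inter ((show Measurable fun s => θ s ω by fun_prop) hA)),
      inter_indicator_one]
    exact lintegral_congr fun s => mul_comm _ _
  have hR (ω : Ω) : ∫⁻ s, A.indicator 1 ω * B.indicator 1 s ∂lam = A.indicator 1 ω * lam B := by
    rw [lintegral_const_mul _ (measurable_one.indicator hB), lintegral_indicator_one hB]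
  have := h (fun ω s => A.indicator 1 ω * B.indicator 1 s) (by fun_prop (disch := assumption))
  simp only [hL, hR] at this
  rw [this, lintegral_mul_const _ (measurable_one.indicator hA), lintegral_indicator_one hA,
    mul_comm (Q A), ← mul_assoc, ENNReal.inv_mul_cancel hB0 hBtop, one_mul]

theorem sigmaFinite [SigmaFinite lam] [SigmaFinite Q] [IsSFiniteKernel ξ]
    (h : IsPalmMeasure θ ξ lam P Q) (hθ : Measurable (Function.uncurry θ))
    (hP0 : ∀ᵐ ω ∂P, ξ ω ≠ 0) : SigmaFinite P := by
  obtain ⟨w, hw0, hw, hwQ⟩ := exists_pos_lintegral_lt_of_sigmaFinite Q one_ne_zero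
  obtain ⟨k, hk0, hk, hklam⟩ := exists_pos_lintegral_lt_of_sigmaFinite lam one_ne_zero
  have hf : Measurable fun ω => ∫⁻ s, w (θ s ω) * k s ∂ξ ω :=
    Measurable.lintegral_kernel_prod_right (by fun_prop)
  refine sigmaFinite_of_lintegral_ne_top hf (hP0.mono fun ω hω h0 => ?_) ?_
  · have : (ae (ξ ω)).NeBot := ae_neBot.2 hω
    obtain ⟨s, hs⟩ := ((lintegral_eq_zero_iff (by fun_prop)).1 h0).exists
    simp [(hw0 _).ne', (hk0 s).ne'] at hs
  · rw [h (fun ω s => w ω * k s) (by fun_prop)]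
    simp_rw [lintegral_const_mul _ hk.coe_nnreal_ennreal]
    rw [lintegral_mul_const _ hw.coe_nnreal_ennreal]
    exact ENNReal.mul_ne_top (hwQ.trans ENNReal.one_lt_top).ne (hklam.trans ENNReal.one_lt_top).ne

end IsPalmMeasure

variable [AddCommGroup G]

theorem IsPalmMeasure.lintegral_lintegral_flow_neg [MeasurableNeg G]
    (h : IsPalmMeasure θ ξ lam P Q) (hθ : Measurable (Function.uncurry θ)) (hθ0 : θ 0 = id)
    (hflow : ∀ s t ω, θ s (θ t ω) = θ (s + t) ω) {φ : Ω → G → ℝ≥0∞}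
    (hφ : Measurable (Function.uncurry φ)) {f : Ω → ℝ≥0∞} (hf : Measurable f) :
    ∫⁻ ω, ∫⁻ u, φ (θ (-u) ω) u * f (θ (-u) ω) ∂lam ∂Q
      = ∫⁻ ω, (∫⁻ u, φ ω u ∂ξ ω) * f ω ∂P := by
  rw [← h (fun ω u => φ (θ (-u) ω) u * f (θ (-u) ω)) (by fun_prop)]
  refine lintegral_congr fun ω => ?_
  simp_rw [flow_neg_apply_flow hθ0 hflow]
  exact lintegral_mul_const _ (by fun_prop)

theorem apply_flow_neg_eq_map [MeasurableAdd G] (hθ0 : θ 0 = id)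
    (hflow : ∀ s t ω, θ s (θ t ω) = θ (s + t) ω)
    (hξ : ∀ ω s B, MeasurableSet B → ξ (θ s ω) ((· + s) ⁻¹' B) = ξ ω B) (ω : Ω) (s : G) :
    ξ (θ (-s) ω) = (ξ ω).map (· + s) := by
  ext B hB
  rw [Measure.map_apply (measurable_add_const s) hB, ← hξ _ s B hB, hflow, add_neg_cancel, hθ0,
    id]

theorem lintegral_apply_flow_neg [MeasurableAdd G]
    (hcov : ∀ ω s, ξ (θ (-s) ω) = (ξ ω).map (· + s)) {φ : G → ℝ≥0∞} (hφ : Measurable φ)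
    (ω : Ω) (s : G) : ∫⁻ t, φ t ∂ξ (θ (-s) ω) = ∫⁻ u, φ (u + s) ∂ξ ω := by
  rw [hcov, lintegral_map hφ (measurable_add_const s)]

theorem lintegral_apply_flow_neg_eq_one [MeasurableAdd G]
    (hcov : ∀ ω s, ξ (θ (-s) ω) = (ξ ω).map (· + s)) (hh : Measurable (Function.uncurry htilde))
    (hh1 : ∀ μ : Measure G, μ ≠ 0 → ∫⁻ s, htilde μ s ∂μ = 1) {ω : Ω} (hω : ξ ω ≠ 0) (t : G) :
    ∫⁻ u, htilde (ξ (θ (-t) ω)) (t + u) ∂ξ ω = 1 := by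
  have hne : ξ (θ (-t) ω) ≠ 0 := by
    rw [hcov, Ne, Measure.map_eq_zero_iff (measurable_add_const t).aemeasurable]
    exact hω
  calc ∫⁻ u, htilde (ξ (θ (-t) ω)) (t + u) ∂ξ ω
      = ∫⁻ u, htilde (ξ (θ (-t) ω)) (u + t) ∂ξ ω := lintegral_congr fun u => by rw [add_comm]
    _ = 1 := by rw [← lintegral_apply_flow_neg hcov (φ := htilde _) (by fun_prop), hh1 _ hne]

variable (θ ξ htilde lam Q) in
noncomputable def palmInversion : Measure Ω :=
  ((Q.prod lam).withDensity fun p => htilde (ξ (θ (-p.2) p.1)) p.2).map fun p => θ (-p.2) p.1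

theorem lintegral_palmInversion [MeasurableNeg G] [SFinite Q] [SFinite lam]
    (hθ : Measurable (Function.uncurry θ)) (hh : Measurable (Function.uncurry htilde))
    {f : Ω → ℝ≥0∞} (hf : Measurable f) :
    ∫⁻ ω, f ω ∂palmInversion θ ξ htilde lam Q
      = ∫⁻ ω, ∫⁻ s, htilde (ξ (θ (-s) ω)) s * f (θ (-s) ω) ∂lam ∂Q := by
  rw [palmInversion, lintegral_map hf (by fun_prop),
    lintegral_withDensity_eq_lintegral_mul _ (by fun_prop) (by fun_prop), lintegral_prod _
      (by fun_prop)]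
  rfl

theorem eq_palmInversion [MeasurableNeg G] [SFinite Q] [SFinite lam]
    (hθ : Measurable (Function.uncurry θ)) (hh : Measurable (Function.uncurry htilde))
    (hP : ∀ A : Set Ω, MeasurableSet A →
      P A = ∫⁻ ω, ∫⁻ s, htilde (ξ (θ (-s) ω)) s
        * Set.indicator A (fun _ => (1 : ℝ≥0∞)) (θ (-s) ω) ∂lam ∂Q) :
    P = palmInversion θ ξ htilde lam Q := by
  ext A hA
  rw [hP A hA, ← lintegral_indicator_one hA,
    lintegral_palmInversion (f := A.indicator 1) hθ hh (measurable_const.indicator hA)]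
  rfl

theorem ae_ne_zero_palmInversion [MeasurableAdd G] [MeasurableNeg G] [SFinite Q] [SFinite lam]
    (hθ : Measurable (Function.uncurry θ)) (hh : Measurable (Function.uncurry htilde))
    (hcov : ∀ ω s, ξ (θ (-s) ω) = (ξ ω).map (· + s)) (hQ0 : ∀ᵐ ω ∂Q, ξ ω ≠ 0) :
    ∀ᵐ ω ∂palmInversion θ ξ htilde lam Q, ξ ω ≠ 0 := by
  have hN : MeasurableSet {ω | ξ ω = 0} := by
    simp_rw [← Measure.measure_univ_eq_zero]
    exact ξ.measurable_coe .univ (measurableSet_singleton 0)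
  have hnotMem : ∀ ω, ξ ω ≠ 0 → ∀ s, θ (-s) ω ∉ {ω | ξ ω = 0} := fun ω hω s h => by
    rw [mem_ofPred_eq, hcov, Measure.map_eq_zero_iff (measurable_add_const s).aemeasurable] at h
    exact hω h
  simp only [ae_iff, not_not]
  rw [← lintegral_indicator_one hN,
    lintegral_palmInversion (f := indicator _ 1) hθ hh (measurable_const.indicator hN)]
  refine (lintegral_congr_ae (hQ0.mono fun ω hω => ?_)).trans lintegral_zero
  simp [indicator_of_notMem (hnotMem ω hω _)]

theorem lintegral_density_mul_lintegral_flow_neg [MeasurableAdd₂ G] [MeasurableNeg G]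
    [SFinite lam] [lam.IsAddLeftInvariant] [IsSFiniteKernel ξ]
    (hθ : Measurable (Function.uncurry θ)) (hflow : ∀ s t ω, θ s (θ t ω) = θ (s + t) ω)
    (hcov : ∀ ω s, ξ (θ (-s) ω) = (ξ ω).map (· + s)) (hh : Measurable (Function.uncurry htilde))
    {g : Ω → G → ℝ≥0∞} (hg : Measurable (Function.uncurry g)) (ω : Ω) :
    ∫⁻ s, htilde (ξ (θ (-s) ω)) s * ∫⁻ t, g (θ t (θ (-s) ω)) t ∂ξ (θ (-s) ω) ∂lam
      = ∫⁻ u, ∫⁻ v, htilde (ξ (θ (-v) (θ u ω))) (v + -u) * g (θ u ω) v ∂lam ∂ξ ω := by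
  calc _ = ∫⁻ s, ∫⁻ u, htilde (ξ (θ (-s) ω)) s * g (θ u ω) (u + s) ∂ξ ω ∂lam := by
        refine lintegral_congr fun s => ?_
        rw [lintegral_apply_flow_neg hcov (by fun_prop), ← lintegral_const_mul _ (by fun_prop)]
        simp_rw [hflow, add_neg_cancel_right]
    _ = ∫⁻ u, ∫⁻ s, htilde (ξ (θ (-s) ω)) s * g (θ u ω) (u + s) ∂lam ∂ξ ω :=
        lintegral_lintegral_swap (by fun_prop)
    _ = _ := by
        refine lintegral_congr fun u => ?_
        conv_rhs => rw [← (measurePreserving_add_left lam u).lintegral_comp (by fun_prop)]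
        refine lintegral_congr fun s => ?_
        rw [hflow, show -(u + s) + u = -s by abel, show u + s + -u = s by abel]

theorem lintegral_lintegral_density_mul_eq_lintegral [MeasurableAdd₂ G] [MeasurableNeg G]
    [SFinite lam] [IsSFiniteKernel ξ] (hθ : Measurable (Function.uncurry θ))
    (hcov : ∀ ω s, ξ (θ (-s) ω) = (ξ ω).map (· + s)) (hh : Measurable (Function.uncurry htilde))
    (hh1 : ∀ μ : Measure G, μ ≠ 0 → ∫⁻ s, htilde μ s ∂μ = 1)
    {g : Ω → G → ℝ≥0∞} (hg : Measurable (Function.uncurry g)) {ω : Ω} (hω : ξ ω ≠ 0) :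
    ∫⁻ u, ∫⁻ v, htilde (ξ (θ (-v) ω)) (v + u) * g ω v ∂lam ∂ξ ω = ∫⁻ v, g ω v ∂lam := by
  rw [lintegral_lintegral_swap (by fun_prop)]
  refine lintegral_congr fun v => ?_
  rw [lintegral_mul_const _ (by fun_prop), lintegral_apply_flow_neg_eq_one hcov hh hh1 hω, one_mul]

theorem isPalmMeasure_palmInversion [MeasurableAdd₂ G] [MeasurableNeg G] [SFinite Q]
    [SFinite lam] [lam.IsAddLeftInvariant] [IsSFiniteKernel ξ]
    (hθ : Measurable (Function.uncurry θ)) (hflow : ∀ s t ω, θ s (θ t ω) = θ (s + t) ω)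
    (hcov : ∀ ω s, ξ (θ (-s) ω) = (ξ ω).map (· + s)) (hQ0 : ∀ᵐ ω ∂Q, ξ ω ≠ 0)
    (hMecke : ∀ g : Ω → G → ℝ≥0∞, Measurable (Function.uncurry g) →
      ∫⁻ ω, ∫⁻ s, g (θ s ω) (-s) ∂ξ ω ∂Q = ∫⁻ ω, ∫⁻ s, g ω s ∂ξ ω ∂Q)
    (hh : Measurable (Function.uncurry htilde))
    (hh1 : ∀ μ : Measure G, μ ≠ 0 → ∫⁻ s, htilde μ s ∂μ = 1) :
    IsPalmMeasure θ ξ lam (palmInversion θ ξ htilde lam Q) Q := by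
  intro g hg
  calc _ = ∫⁻ ω, ∫⁻ u, ∫⁻ v, htilde (ξ (θ (-v) (θ u ω))) (v + -u) * g (θ u ω) v ∂lam ∂ξ ω ∂Q := by
        rw [lintegral_palmInversion hθ hh (Measurable.lintegral_kernel_prod_right (by fun_prop))]
        exact lintegral_congr fun ω =>
          lintegral_density_mul_lintegral_flow_neg hθ hflow hcov hh hg ω
    _ = ∫⁻ ω, ∫⁻ u, ∫⁻ v, htilde (ξ (θ (-v) ω)) (v + u) * g ω v ∂lam ∂ξ ω ∂Q :=
        hMecke (fun ω t => ∫⁻ v, htilde (ξ (θ (-v) ω)) (v + t) * g ω v ∂lam) (by fun_prop)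
    _ = _ := lintegral_congr_ae (hQ0.mono fun ω hω =>
        lintegral_lintegral_density_mul_eq_lintegral hθ hcov hh hh1 hg hω)

theorem map_flow_palmInversion [MeasurableAdd G] [MeasurableNeg G] [SFinite Q] [SFinite lam]
    [lam.IsAddLeftInvariant] (hθ : Measurable (Function.uncurry θ)) (hθ0 : θ 0 = id)
    (hflow : ∀ s t ω, θ s (θ t ω) = θ (s + t) ω)
    (hcov : ∀ ω s, ξ (θ (-s) ω) = (ξ ω).map (· + s)) (hh : Measurable (Function.uncurry htilde))
    (hh1 : ∀ μ : Measure G, μ ≠ 0 → ∫⁻ s, htilde μ s ∂μ = 1)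
    (hpalm : IsPalmMeasure θ ξ lam (palmInversion θ ξ htilde lam Q) Q)
    (hP0 : ∀ᵐ ω ∂palmInversion θ ξ htilde lam Q, ξ ω ≠ 0) (t : G) :
    (palmInversion θ ξ htilde lam Q).map (θ t) = palmInversion θ ξ htilde lam Q := by
  refine Measure.ext_of_lintegral _ fun f hf => ?_
  rw [lintegral_map hf (by fun_prop), lintegral_palmInversion hθ hh (by fun_prop)]
  calc ∫⁻ ω, ∫⁻ s, htilde (ξ (θ (-s) ω)) s * f (θ t (θ (-s) ω)) ∂lam ∂Q
      = ∫⁻ ω, ∫⁻ u, htilde (ξ (θ (-t) (θ (-u) ω))) (t + u) * f (θ (-u) ω) ∂lam ∂Q := by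
        refine lintegral_congr fun ω => ?_
        rw [← (measurePreserving_add_left lam t).lintegral_comp (by fun_prop)]
        refine lintegral_congr fun u => ?_
        simp only [hflow, show t + -(t + u) = -u by abel, show -t + -u = -(t + u) by abel]
    _ = ∫⁻ ω, (∫⁻ u, htilde (ξ (θ (-t) ω)) (t + u) ∂ξ ω) * f ω ∂palmInversion θ ξ htilde lam Q :=
        hpalm.lintegral_lintegral_flow_neg hθ hθ0 hflow
          (φ := fun ω u => htilde (ξ (θ (-t) ω)) (t + u)) (by fun_prop) hf
    _ = ∫⁻ ω, f ω ∂palmInversion θ ξ htilde lam Q := lintegral_congr_ae (hP0.mono fun ω hω => by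
        simp only [lintegral_apply_flow_neg_eq_one hcov hh hh1 hω, one_mul])

end Palm

/-- Mecke's characterization, sufficiency: a σ-finite measure ℚ
satisfying the Mecke equation is the Palm measure of the explicitly constructed
stationary measure ℙ. -/
theorem stmt13
    {Ω : Type*} [MeasurableSpace Ω]
    {G : Type*} [AddCommGroup G] [TopologicalSpace G] [IsTopologicalAddGroup G]
    [LocallyCompactSpace G] [SecondCountableTopology G] [T2Space G]
    [MeasurableSpace G] [BorelSpace G]
    (lam : Measure G) [lam.IsAddHaarMeasure]
    (θ : G → Ω → Ω)
    (hθmeas : Measurable fun p : Ω × G => θ p.2 p.1)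
    (hθ0 : θ 0 = id)
    (hθadd : ∀ s t : G, θ s ∘ θ t = θ (s + t))
    (ξ : Ω → Measure G)
    (hξmeas : ∀ B : Set G, MeasurableSet B → Measurable fun ω => ξ ω B)
    (hξlocfin : ∀ ω, IsLocallyFiniteMeasure (ξ ω))
    (hξinv : ∀ (ω : Ω) (s : G) (B : Set G), MeasurableSet B →
      ξ (θ s ω) ((· + s) ⁻¹' B) = ξ ω B)
    (Q : Measure Ω) [SigmaFinite Q]
    (hQ0 : Q {ω | ξ ω Set.univ = 0} = 0)
    (hMecke : ∀ g : Ω → G → ℝ≥0∞, Measurable (fun p : Ω × G => g p.1 p.2) →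
      ∫⁻ ω, ∫⁻ s, g (θ s ω) (-s) ∂(ξ ω) ∂Q = ∫⁻ ω, ∫⁻ s, g ω s ∂(ξ ω) ∂Q)
    (htilde : Measure G → G → ℝ≥0∞)
    (htildemeas : Measurable fun p : Measure G × G => htilde p.1 p.2)
    (htilde1 : ∀ μ : Measure G, μ ≠ 0 → ∫⁻ s, htilde μ s ∂μ = 1)
    (P : Measure Ω)
    (hP : ∀ A : Set Ω, MeasurableSet A →
      P A = ∫⁻ ω, ∫⁻ s, htilde (ξ (θ (-s) ω)) s
        * Set.indicator A (fun _ => (1 : ℝ≥0∞)) (θ (-s) ω) ∂lam ∂Q) :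
    SigmaFinite P
    ∧ (∀ s : G, Measure.map (θ s) P = P)
    ∧ (∀ B : Set G, MeasurableSet B → 0 < lam B → lam B < ∞ →
        ∀ A : Set Ω, MeasurableSet A →
          Q A = (lam B)⁻¹ * ∫⁻ ω, ξ ω (B ∩ {s | θ s ω ∈ A}) ∂P) := by
  have hθ : Measurable (Function.uncurry θ) := hθmeas.comp measurable_swap
  have hflow : ∀ s t ω, θ s (θ t ω) = θ (s + t) ω := fun s t => congrFun (hθadd s t)
  let ξK : Kernel Ω G := ⟨ξ, Measure.measurable_of_measurable_coe ξ hξmeas⟩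
  have : IsSFiniteKernel ξK := ξK.isSFiniteKernel_of_isLocallyFiniteMeasure
  have hcov := apply_flow_neg_eq_map (ξ := ξK) hθ0 hflow hξinv
  have hQ0' : ∀ᵐ ω ∂Q, ξK ω ≠ 0 := by
    simp only [ae_iff, ne_eq, not_not, ← Measure.measure_univ_eq_zero]
    exact hQ0
  obtain rfl : P = palmInversion θ ξK htilde lam Q := eq_palmInversion hθ htildemeas hP
  have hpalm :=
    isPalmMeasure_palmInversion (lam := lam) hθ hflow hcov hQ0' hMecke htildemeas htilde1
  have hP0 := ae_ne_zero_palmInversion (lam := lam) hθ htildemeas hcov hQ0'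
  exact ⟨hpalm.sigmaFinite hθ hP0,
    map_flow_palmInversion hθ hθ0 hflow hcov htildemeas htilde1 hpalm hP0,
    fun B hB hB0 hBtop A hA => hpalm.measure_eq hθ hA hB hB0.ne' hBtop.ne⟩
end

section
/- On G = {0,1,2} with addition modulo 3, let ξ_0, ξ_1, ξ_2 be independent Bernoulli(1/2) random variables and let ℚ be the Palm probability measure of the point process ξ = ξ_0 δ_0 + ξ_1 δ_1 + ξ_2 δ_2 (so that under ℚ, ξ{0} = 1 a.s. and ξ{1}, ξ{2} are independent Bernoulli(1/2)). With C := {0,1}, T_C(0,·) the uniform distribution on the atoms of ξ in C, and A := {ξ{1} = 1}, one has 𝔼_ℚ[∫ 1_A(θ_s) T_C(0,ds)] = 3/8 ≠ 1/2 = ℚ(A). Hence a Palm measure need not be invariant under the single kernel T_C. -/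
open MeasureTheory Set
open scoped ENNReal

instance : MeasurableSpace (ZMod 3) := ⊤
instance : MeasurableSingletonClass (ZMod 3) := ⟨fun _ => trivial⟩

/-- The sample space: configurations of atoms on `ZMod 3`. -/
abbrev Omega3 : Type := ZMod 3 → Bool

/-- The point process: `ξ ω = ∑_x ω_x δ_x`. -/
noncomputable def xi3 (ω : Omega3) : Measure (ZMod 3) :=
  ∑ x : ZMod 3, if ω x then Measure.dirac x else 0

/-- The shift flow on configurations. -/
def theta3 (s : ZMod 3) (ω : Omega3) : Omega3 := fun x => ω (x + s)

/-- The Palm probability measure of the Bernoulli(1/2) point process on `ZMod 3`: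
`ω 0 = true` a.s. and `ω 1`, `ω 2` are independent Bernoulli(1/2). -/
noncomputable def Q3 : Measure Omega3 :=
  Measure.map
    (fun p : Bool × Bool => fun x : ZMod 3 => if x = 0 then true else if x = 1 then p.1 else p.2)
    (((4 : ℝ≥0∞))⁻¹ • Measure.count)

/-- The kernel `T_C(ω,t,·)`: pick a point uniformly in the mass of `ξ(ω)` in `C + t`;
if the mass vanishes, use a fixed probability measure `ν`. -/
noncomputable def massKernelTC {Ω : Type*} {G : Type*} [AddCommGroup G] [MeasurableSpace G]
    (ξ : Ω → Measure G) (ν : Measure G) (C : Set G) (ω : Ω) (t : G) :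
    MeasureTheory.Measure G :=
  if ξ ω ((fun x => x - t) ⁻¹' C) ≠ 0 then
    (ξ ω ((fun x => x - t) ⁻¹' C))⁻¹ • (ξ ω).restrict ((fun x => x - t) ⁻¹' C)
  else ν

/-!
Under `Q3` the configuration has an atom at `0` and independent fair atoms at `1` and `2`.
Because of the atom at `0`, `T_C(ω,0,·)` is always the uniform distribution on the atoms in
`{0,1}`, and `θ_s ω ∈ A` iff `ω` has an atom at `1 + s`. On the four configurations
`(ω 1, ω 2)` the inner integral is therefore `0, 0, 1/2, 1`, with mean `3/8`, whereas
`ℚ(A) = 1/2`.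
-/

theorem lintegral_massKernelTC_of_ne_zero {Ω G : Type*} [AddCommGroup G] [MeasurableSpace G]
    {ξ : Ω → Measure G} {ν : Measure G} {C : Set G} {ω : Ω} {t : G}
    (h : ξ ω ((· - t) ⁻¹' C) ≠ 0) (f : G → ℝ≥0∞) :
    ∫⁻ s, f s ∂massKernelTC ξ ν C ω t
      = (ξ ω ((· - t) ⁻¹' C))⁻¹ * ∫⁻ s in (· - t) ⁻¹' C, f s ∂ξ ω := by
  rw [massKernelTC, if_pos h, lintegral_smul_measure, smul_eq_mul]

theorem sum_zmod_three {M : Type*} [AddCommMonoid M] (f : ZMod 3 → M) :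
    ∑ x, f x = f 0 + f 1 + f 2 :=
  Fin.sum_univ_three f

theorem lintegral_xi3 (ω : Omega3) (f : ZMod 3 → ℝ≥0∞) :
    ∫⁻ s, f s ∂xi3 ω = ∑ x, if ω x then f x else 0 := by
  rw [xi3, lintegral_finsetSum_measure]
  refine Finset.sum_congr rfl fun x _ => ?_
  split_ifs <;> simp

theorem setLIntegral_xi3 (ω : Omega3) (S : Set (ZMod 3)) (f : ZMod 3 → ℝ≥0∞) :
    ∫⁻ s in S, f s ∂xi3 ω = ∑ x, if ω x then S.indicator f x else 0 := by
  rw [← lintegral_indicator MeasurableSet.of_discrete, lintegral_xi3]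

theorem xi3_apply (ω : Omega3) (S : Set (ZMod 3)) :
    xi3 ω S = ∑ x, if ω x then S.indicator 1 x else 0 := by
  rw [← setLIntegral_one, setLIntegral_xi3]
  rfl

theorem xi3_ne_zero_of_mem {ω : Omega3} {x : ZMod 3} {S : Set (ZMod 3)} (hx : ω x = true)
    (hxS : x ∈ S) : xi3 ω S ≠ 0 := by
  rw [xi3_apply]
  intro h
  simpa [hx, hxS] using Finset.sum_eq_zero_iff.mp h x (Finset.mem_univ x)

def palmConfig (p : Bool × Bool) : Omega3 :=
  fun x : ZMod 3 => if x = 0 then true else if x = 1 then p.1 else p.2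

theorem lintegral_Q3 (f : Omega3 → ℝ≥0∞) :
    ∫⁻ ω, f ω ∂Q3 = 4⁻¹ * ∑ p : Bool × Bool, f (palmConfig p) := by
  rw [Q3, lintegral_map (measurable_of_countable f) (measurable_of_countable _),
    lintegral_smul_measure, lintegral_count, tsum_fintype, smul_eq_mul]
  rfl

theorem Q3_setOf_apply_one : Q3 {ω : Omega3 | ω 1 = true} = 1 / 2 := by
  rw [← lintegral_indicator_one MeasurableSet.of_discrete, lintegral_Q3]
  have hcount :
      ∑ p : Bool × Bool, {ω : Omega3 | ω 1 = true}.indicator (1 : Omega3 → ℝ≥0∞) (palmConfig p)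
        = 2 := by
    simp [Fintype.sum_prod_type, palmConfig, one_add_one_eq_two]
  rw [hcount, ← ENNReal.toReal_eq_toReal_iff' (by finiteness) (by finiteness)]
  norm_num [ENNReal.toReal_inv, ENNReal.toReal_div]

theorem lintegral_indicator_theta3_massKernelTC_palmConfig (a b : Bool) :
    ∫⁻ s, {ω' : Omega3 | ω' 1 = true}.indicator (fun _ => (1 : ℝ≥0∞))
        (theta3 s (palmConfig (a, b)))
        ∂massKernelTC xi3 (Measure.dirac 0) {0, 1} (palmConfig (a, b)) 0
      = if a then (if b then 1 else 2⁻¹) else 0 := by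
  have hmass : xi3 (palmConfig (a, b)) ((· - 0) ⁻¹' {0, 1}) ≠ 0 :=
    xi3_ne_zero_of_mem (x := 0) rfl (by simp)
  rw [lintegral_massKernelTC_of_ne_zero hmass, setLIntegral_xi3, xi3_apply]
  cases a <;> cases b <;>
    simp +decide [sum_zmod_three, palmConfig, theta3, one_add_one_eq_two, ENNReal.inv_mul_cancel]

/-- Example 6.5: for the Palm measure ℚ of the Bernoulli(1/2) point
process on `ℤ/3ℤ`, with `C = {0,1}` and `A = {ξ{1} = 1}`, one has
`𝔼_ℚ[∫ 1_A(θ_s) T_C(0,ds)] = 3/8 ≠ 1/2 = ℚ(A)`: a Palm measure need not be invariant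
under the single kernel `T_C`. -/
theorem stmt17 :
    (∫⁻ ω, ∫⁻ s, Set.indicator {ω' : Omega3 | ω' 1 = true} (fun _ => (1 : ℝ≥0∞)) (theta3 s ω)
        ∂(massKernelTC xi3 (Measure.dirac 0) ({0, 1} : Set (ZMod 3)) ω 0) ∂Q3
      = 3 / 8)
    ∧ Q3 {ω' : Omega3 | ω' 1 = true} = 1 / 2
    ∧ (3 / 8 : ℝ≥0∞) ≠ 1 / 2 := by
  refine ⟨?_, Q3_setOf_apply_one, ?_⟩
  · simp only [lintegral_Q3, Fintype.sum_prod_type, Fintype.sum_bool,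
      lintegral_indicator_theta3_massKernelTC_palmConfig]
    rw [← ENNReal.toReal_eq_toReal_iff' (by finiteness) (by finiteness)]
    norm_num [ENNReal.toReal_add, ENNReal.toReal_inv, ENNReal.toReal_div]
  · rw [Ne, ← ENNReal.toReal_eq_toReal_iff' (by finiteness) (by finiteness)]
    norm_num [ENNReal.toReal_div]
end
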